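/- arXiv:1005.1744 — 2 statements merged into one kernel-verified Lean document; each statement's English description precedes it below -/
import Mathlib

section
/- Let P be an n×l binary matrix with rows P₁,…,Pₙ, let θ be any real angle, let x ∈ F₂ˡ be nonzero, fix an index j with x_j = 1, and let P⊤x be the projection of P along x (the n×l matrix whose a-th row is P_a + P_{a,j}·x). Then 2^{−l} · Σ_{s∈F₂ˡ} (−1)^{x·s} · exp( iθ · Σ_{j'=1}^n (−1)^{P_{j'}·s} ) = α_{(P⊤x, θ)} − α_{(P, θ)}. (This is the transition amplitude ⟨x| exp(iθ H_P) |0⟩ of the X-program (P,θ).) -/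
/-!
Write `f c = exp (iθ (n - 2|c|))`, so that `2ˡ` times the amplitude is `∑ₛ (-1)^(x·s) f (P s)`.
Splitting by the sign gives `2 ∑_{x·s = 0} f (P s) - ∑ₛ f (P s)`. The map `s ↦ s + (x·s) e_j` fixes
the hyperplane `x·s = 0` and maps its complement bijectively onto it (as `x_j = 1`), and
`P⊤x = P (1 + e_j xᵀ)`, so the first term is `∑ₛ f ((P⊤x) s)`. Finally, for any `Q` every
nonempty fibre of `s ↦ Q s` is a coset of the kernel, of size `2^(l - rank Q)`, whence
`∑ₛ f (Q s) = 2ˡ α_(Q,θ)`.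
-/

open Matrix BigOperators Finset

noncomputable section

/-- The binary code generated by the columns of `P`: all vectors `P·s`. -/
def code {m : Type*} [Fintype m] {l : ℕ} (P : Matrix m (Fin l) (ZMod 2)) :
    Finset (m → ZMod 2) :=
  Finset.image P.mulVec Finset.univ

/-- Rank function of the binary matroid of `P`: the F₂-rank of the submatrix of
rows indexed by `X`. -/
def rho {m : Type*} [Fintype m] {l : ℕ} (P : Matrix m (Fin l) (ZMod 2)) (X : Finset m) : ℕ :=
  (P.submatrix (fun i : {i // i ∈ X} => (i : m)) id).rank

/-- Tutte polynomial of the binary matroid of `P`. -/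
def tutte {m : Type*} [Fintype m] {l : ℕ} (P : Matrix m (Fin l) (ZMod 2)) (x y : ℂ) : ℂ :=
  ∑ X ∈ (Finset.univ : Finset m).powerset,
    (x - 1) ^ (rho P Finset.univ - rho P X) * (y - 1) ^ (X.card - rho P X)

/-- Normalised weight enumerator. -/
def alpha {m : Type*} [Fintype m] {l : ℕ} (P : Matrix m (Fin l) (ZMod 2)) (θ : ℝ) : ℂ :=
  (2 : ℂ) ^ (-(P.rank : ℤ)) *
    ∑ c ∈ code P, Complex.exp (Complex.I * θ * ((Fintype.card m : ℂ) - 2 * (hammingNorm c : ℂ)))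

/-- The IQP probability distribution of an X-program `(P, θ)`. -/
def iqpProb {n l : ℕ} (P : Matrix (Fin n) (Fin l) (ZMod 2)) (θ : ℝ) (x : Fin l → ZMod 2) : ℝ :=
  ‖(2 : ℂ) ^ (-(l : ℤ)) *
    ∑ a : Fin l → ZMod 2, (-1 : ℂ) ^ (x ⬝ᵥ a).val *
      Complex.exp (Complex.I * θ * ∑ j, (-1 : ℂ) ^ ((P j) ⬝ᵥ a).val)‖ ^ 2

/-- Affinification: the submatrix of rows `P_j` with `P_j ⬝ s = 1`. -/
def affin {n l : ℕ} (P : Matrix (Fin n) (Fin l) (ZMod 2)) (s : Fin l → ZMod 2) :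
    Matrix {j : Fin n // (P j) ⬝ᵥ s = 1} (Fin l) (ZMod 2) :=
  Matrix.of fun j k => P j.1 k

theorem AddMonoidHom.sum_comp_eq_card_ker_nsmul {G H M : Type*} [AddGroup G] [Fintype G]
    [AddGroup H] [DecidableEq H] [AddCommMonoid M] (f : G →+ H) (φ : H → M) :
    ∑ g, φ (f g) = #{g | f g = 0} • ∑ h ∈ univ.image f, φ h := by
  rw [Finset.sum_comp, Finset.smul_sum]
  refine Finset.sum_congr rfl fun h hh => ?_
  obtain ⟨g, -, rfl⟩ := Finset.mem_image.mp hh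
  rw [AddMonoidHom.card_fiber_eq_of_mem_range f ⟨g, rfl⟩ ⟨0, map_zero f⟩]

theorem Matrix.card_ker_mulVec_mul_card_pow_rank {m n K : Type*} [Fintype m] [Fintype n]
    [DecidableEq n] [Field K] [Fintype K] [DecidableEq K] (Q : Matrix m n K) :
    #{v | Q *ᵥ v = 0} * Fintype.card K ^ Q.rank = Fintype.card K ^ Fintype.card n := by
  classical
  have hker : #{v | Q *ᵥ v = 0} = Fintype.card (LinearMap.ker Q.mulVecLin) := by
    rw [← Fintype.card_subtype]
    exact Fintype.card_congr (Equiv.subtypeEquivRight fun v => by simp)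
  have hdim := LinearMap.finrank_range_add_finrank_ker Q.mulVecLin
  rw [Module.finrank_fintype_fun_eq_card] at hdim
  rw [hker, Module.card_eq_pow_finrank (K := K), ← pow_add, ← hdim, add_comm, Matrix.rank]

theorem ZMod.neg_one_pow_val_eq_ite {R : Type*} [Ring R] (v : ZMod 2) :
    (-1 : R) ^ v.val = if v = 0 then 1 else -1 := by
  rcases (by decide : ∀ v : ZMod 2, v = 0 ∨ v = 1) v with rfl | rfl <;> simp [ZMod.val_one]

theorem sum_neg_one_pow_val_eq_card_sub_two_mul_hammingNorm {m R : Type*} [Fintype m] [Ring R]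
    (c : m → ZMod 2) :
    ∑ a, (-1 : R) ^ (c a).val = Fintype.card m - 2 * hammingNorm c := by
  classical
  have hterm : ∀ v : ZMod 2, (-1 : R) ^ v.val = 1 - 2 * if v ≠ 0 then 1 else 0 := fun v => by
    rw [ZMod.neg_one_pow_val_eq_ite]
    split_ifs <;> simp_all; norm_num
  simp only [hterm, Finset.sum_sub_distrib, ← Finset.mul_sum, Finset.sum_boole, hammingNorm]
  simp

theorem sum_neg_one_pow_val_mul_eq {ι R : Type*} [Fintype ι] [Ring R] (φ : ι → ZMod 2)
    (F : ι → R) :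
    ∑ i, (-1 : R) ^ (φ i).val * F i = 2 * ∑ i with φ i = 0, F i - ∑ i, F i := by
  rw [Finset.sum_filter, Finset.mul_sum, ← Finset.sum_sub_distrib]
  refine Finset.sum_congr rfl fun i _ => ?_
  rw [ZMod.neg_one_pow_val_eq_ite]
  split_ifs <;> simp [two_mul]

theorem Matrix.mulVec_proj {m n R : Type*} [Fintype n] [DecidableEq n] [CommSemiring R]
    (P : Matrix m n R) (x : n → R) (j : n) (s : n → R) :
    (Matrix.of fun a b => P a b + P a j * x b) *ᵥ s = P *ᵥ (s + (x ⬝ᵥ s) • Pi.single j 1) := by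
  ext a
  rw [Matrix.mulVec_add, Matrix.mulVec_smul, Matrix.mulVec_single_one]
  simp only [Matrix.mulVec, dotProduct, Matrix.of_apply, add_mul, Finset.sum_add_distrib,
    Finset.sum_mul, Pi.add_apply, Pi.smul_apply, Matrix.col_apply, smul_eq_mul]
  exact congrArg _ (Finset.sum_congr rfl fun _ _ => by ring)

theorem sum_comp_add_dotProduct_smul_single {n M : Type*} [Fintype n] [DecidableEq n]
    [AddCommMonoid M] {x : n → ZMod 2} {j : n} (hj : x j = 1) (F : (n → ZMod 2) → M) :
    ∑ s, F (s + (x ⬝ᵥ s) • Pi.single j 1) = 2 • ∑ s with x ⬝ᵥ s = 0, F s := by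
  set e : n → ZMod 2 := Pi.single j 1
  have hxe : x ⬝ᵥ e = 1 := by simp [e, hj]
  have hpi : ∀ s, x ⬝ᵥ s = 0 → s + (x ⬝ᵥ s) • e = s := fun s hs => by simp [hs]
  have hflip : ∑ s with x ⬝ᵥ s ≠ 0, F (s + (x ⬝ᵥ s) • e) = ∑ s with x ⬝ᵥ s = 0, F s := by
    refine Finset.sum_equiv (Equiv.addRight e) (fun s => ?_) (fun s hs => ?_)
    · simp only [Finset.mem_filter, Finset.mem_univ, true_and, Equiv.coe_addRight,
        dotProduct_add, hxe]
      exact (by decide : ∀ v : ZMod 2, v ≠ 0 ↔ v + 1 = 0) _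
    · have hs1 : x ⬝ᵥ s = 1 :=
        (by decide : ∀ v : ZMod 2, v ≠ 0 → v = 1) _ (Finset.mem_filter.mp hs).2
      rw [hs1, one_smul]
      rfl
  rw [← Finset.sum_filter_add_sum_filter_not _ (fun s => x ⬝ᵥ s = 0), hflip,
    Finset.sum_congr rfl fun s hs => congrArg F (hpi s (Finset.mem_filter.mp hs).2), two_nsmul]

def phase {m : Type*} [Fintype m] (θ : ℝ) (c : m → ZMod 2) : ℂ :=
  Complex.exp (Complex.I * θ * ∑ a, (-1 : ℂ) ^ (c a).val)

theorem two_pow_mul_alpha {m : Type*} [Fintype m] {l : ℕ} (Q : Matrix m (Fin l) (ZMod 2))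
    (θ : ℝ) : (2 : ℂ) ^ l * alpha Q θ = ∑ s, phase θ (Q *ᵥ s) := by
  classical
  have hker := congrArg (Nat.cast (R := ℂ)) Q.card_ker_mulVec_mul_card_pow_rank
  simp only [ZMod.card, Fintype.card_fin, Nat.cast_mul, Nat.cast_pow, Nat.cast_ofNat] at hker
  have hsum : ∑ s, phase θ (Q *ᵥ s) = #{v | Q *ᵥ v = 0} • ∑ c ∈ code Q, phase θ c :=
    AddMonoidHom.sum_comp_eq_card_ker_nsmul Q.mulVecLin.toAddMonoidHom (phase θ)
  rw [hsum, alpha, ← hker]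
  simp only [phase, sum_neg_one_pow_val_eq_card_sub_two_mul_hammingNorm, nsmul_eq_mul]
  rw [_root_.zpow_neg, zpow_natCast]
  field_simp

theorem amplitude_eq_alpha_proj_sub_alpha_general {n l : ℕ} (P : Matrix (Fin n) (Fin l) (ZMod 2))
    (θ : ℝ) (x : Fin l → ZMod 2) (j : Fin l) (hj : x j = 1) :
    (2 : ℂ) ^ (-(l : ℤ)) *
        ∑ s : Fin l → ZMod 2, (-1 : ℂ) ^ (x ⬝ᵥ s).val *
          Complex.exp (Complex.I * θ * ∑ j', (-1 : ℂ) ^ ((P j') ⬝ᵥ s).val) =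
      alpha (Matrix.of fun a b => P a b + P a j * x b) θ - alpha P θ := by
  calc _ = (2 : ℂ) ^ (-(l : ℤ)) * ∑ s, (-1 : ℂ) ^ (x ⬝ᵥ s).val * phase θ (P *ᵥ s) := rfl
    _ = (2 : ℂ) ^ (-(l : ℤ)) *
          (∑ s, phase θ (P *ᵥ (s + (x ⬝ᵥ s) • Pi.single j 1)) - ∑ s, phase θ (P *ᵥ s)) := by
      rw [sum_neg_one_pow_val_mul_eq,
        sum_comp_add_dotProduct_smul_single hj (fun s => phase θ (P *ᵥ s)), two_nsmul, two_mul]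
    _ = alpha (Matrix.of fun a b => P a b + P a j * x b) θ - alpha P θ := by
      simp only [← Matrix.mulVec_proj, ← two_pow_mul_alpha, ← mul_sub, _root_.zpow_neg,
        zpow_natCast]
      field_simp

/-- for nonzero `x` with `x j = 1`, the transition amplitude
`⟨x|exp(iθH_P)|0⟩ = α_{(P⊤x,θ)} − α_{(P,θ)}`, where `P⊤x` has `a`-th row
`P_a + P_{a,j}·x`. -/
theorem amplitude_eq_alpha_proj_sub_alpha {n l : ℕ} (P : Matrix (Fin n) (Fin l) (ZMod 2))
    (θ : ℝ) (x : Fin l → ZMod 2) (hx : x ≠ 0) (j : Fin l) (hj : x j = 1) :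
    (2 : ℂ) ^ (-(l : ℤ)) *
        ∑ s : Fin l → ZMod 2, (-1 : ℂ) ^ (x ⬝ᵥ s).val *
          Complex.exp (Complex.I * θ * ∑ j', (-1 : ℂ) ^ ((P j') ⬝ᵥ s).val) =
      alpha (Matrix.of fun a b => P a b + P a j * x b) θ - alpha P θ :=
  amplitude_eq_alpha_proj_sub_alpha_general P θ x j hj

end
end

section
/- Let P be an n×l binary matrix, θ a real angle, and let M be an l×l binary matrix with M² = M (an idempotent linear projector on F₂ˡ). Let K be the kernel of M, let R* be the column space of Mᵀ, and let d be the F₂-dimension of R*. Then for every x ∈ F₂ˡ with M·x = x, the marginal probability satisfies Σ_{k∈K} ℙ[X = x+k] = 2^{−d} · Σ_{s∈R*} (−1)^{x·s} · α_{(P_s, 2θ)}. -/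
open Matrix BigOperators Finset

noncomputable section

/-! Writing `ℙ[X = y]` as `ψ · ψ̄` and substituting `b = a + s` in the double sum turns each
probability into a Fourier series `ℙ[X = y] = 2⁻ˡ Σₛ (-1)^{y·s} α_{(P_s, 2θ)}`: the phases
`θ Σⱼ (-1)^{Pⱼ·a}` at `a` and at `a + s` differ exactly by twice the row sum over `P_s`, and a
sum over `a` of a function of `P_s a` is a multiple of the weight enumerator of `C(P_s)`.
Summing over `x + ker M` keeps only the characters `s ⊥ ker M`, and for idempotent `M` these
form the column space of `Mᵀ`. -/

open Complex ComplexConjugate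

lemma zmod_two_eq_zero_or_one (u : ZMod 2) : u = 0 ∨ u = 1 := by
  decide +revert

section NegOnePow

variable {R : Type*} [Ring R]

lemma neg_one_pow_val_add (u v : ZMod 2) :
    (-1 : R) ^ (u + v).val = (-1) ^ u.val * (-1) ^ v.val := by
  rw [ZMod.val_add, ← neg_one_pow_eq_pow_mod_two (R := R), pow_add]

lemma neg_one_pow_val_mul_self (u : ZMod 2) : (-1 : R) ^ u.val * (-1) ^ u.val = 1 := by
  rw [← pow_add, ← two_mul, pow_mul, neg_one_sq, one_pow]

end NegOnePow

lemma conj_neg_one_pow (k : ℕ) : conj ((-1 : ℂ) ^ k) = (-1) ^ k := by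
  simp

lemma zpow_neg_mul_pow_sub {G : Type*} [GroupWithZero G] {a : G} (ha : a ≠ 0) {r l : ℕ}
    (h : r ≤ l) : a ^ (-(l : ℤ)) * a ^ (l - r) = a ^ (-(r : ℤ)) := by
  rw [← zpow_natCast, ← zpow_add₀ ha]
  congr 1
  omega

section FiniteField

variable {K m n : Type*} [Field K] [Fintype K] [DecidableEq K] [Fintype m] [Fintype n]
  [DecidableEq n]

lemma card_mulVec_eq_zero (A : Matrix m n K) :
    #{a : n → K | A *ᵥ a = 0} = Fintype.card K ^ (Fintype.card n - A.rank) := by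
  have hrank := LinearMap.finrank_range_add_finrank_ker A.mulVecLin
  rw [Module.finrank_fintype_fun_eq_card] at hrank
  rw [← Fintype.card_subtype, ← Nat.card_eq_fintype_card]
  change Nat.card (LinearMap.ker A.mulVecLin) = _
  rw [Module.natCard_eq_pow_finrank (K := K), Nat.card_eq_fintype_card]
  congr 1
  rw [Matrix.rank]
  omega

lemma sum_comp_mulVec {β : Type*} [AddCommMonoid β] (A : Matrix m n K) (g : (m → K) → β) :
    ∑ a, g (A *ᵥ a) =
      Fintype.card K ^ (Fintype.card n - A.rank) • ∑ c ∈ univ.image A.mulVec, g c := by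
  rw [sum_comp, smul_sum]
  refine sum_congr rfl fun c hc => ?_
  obtain ⟨a, -, rfl⟩ := mem_image.mp hc
  rw [← card_mulVec_eq_zero A]
  congr 1
  exact AddMonoidHom.card_fiber_eq_of_mem_range A.mulVecLin ⟨a, rfl⟩ ⟨0, map_zero _⟩

end FiniteField

section SignSum

variable {m : Type*} [Fintype m] {l : ℕ}

def signSum (P : Matrix m (Fin l) (ZMod 2)) (a : Fin l → ZMod 2) : ℂ :=
  ∑ j, (-1 : ℂ) ^ (P j ⬝ᵥ a).val

lemma signSum_eq (P : Matrix m (Fin l) (ZMod 2)) (a : Fin l → ZMod 2) :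
    signSum P a = Fintype.card m - 2 * hammingNorm (P *ᵥ a) := by
  have hterm (u : ZMod 2) : (-1 : ℂ) ^ u.val = 1 - 2 * if u ≠ 0 then 1 else 0 := by
    obtain rfl | rfl := zmod_two_eq_zero_or_one u <;> norm_num [ZMod.val_one]
  simp only [signSum, hterm, sum_sub_distrib, ← mul_sum, sum_boole, sum_const, card_univ,
    nsmul_one]
  rfl

lemma conj_signSum (P : Matrix m (Fin l) (ZMod 2)) (a : Fin l → ZMod 2) :
    conj (signSum P a) = signSum P a := by
  simp only [signSum, map_sum, conj_neg_one_pow]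

lemma alpha_eq_sum_exp_signSum (P : Matrix m (Fin l) (ZMod 2)) (θ : ℝ) :
    alpha P θ = 2 ^ (-(l : ℤ)) * ∑ a, exp (I * θ * signSum P a) := by
  simp only [signSum_eq]
  rw [sum_comp_mulVec P (fun c => exp (I * θ * (Fintype.card m - 2 * hammingNorm c))),
    ZMod.card, Fintype.card_fin, nsmul_eq_mul, ← mul_assoc]
  have hr : P.rank ≤ l := by simpa using P.rank_le_card_width
  push_cast
  rw [zpow_neg_mul_pow_sub two_ne_zero hr, alpha, code]

end SignSum

lemma signSum_sub_signSum_add {n l : ℕ} (P : Matrix (Fin n) (Fin l) (ZMod 2))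
    (a s : Fin l → ZMod 2) : signSum P a - signSum P (a + s) = 2 * signSum (affin P s) a := by
  rw [signSum, signSum, ← sum_sub_distrib,
    ← Fintype.sum_subtype_add_sum_subtype (fun j => P j ⬝ᵥ s = 1), signSum, mul_sum]
  have hflip (j : {j // P j ⬝ᵥ s = 1}) :
      (-1 : ℂ) ^ (P j ⬝ᵥ a).val - (-1) ^ (P j ⬝ᵥ (a + s)).val =
        2 * (-1) ^ (P j ⬝ᵥ a).val := by
    rw [dotProduct_add, neg_one_pow_val_add, j.2, ZMod.val_one]
    ring
  have hkeep (j : {j // ¬P j ⬝ᵥ s = 1}) :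
      (-1 : ℂ) ^ (P j ⬝ᵥ a).val - (-1) ^ (P j ⬝ᵥ (a + s)).val = 0 := by
    rw [dotProduct_add, (zmod_two_eq_zero_or_one _).resolve_right j.2, add_zero, sub_self]
  simp only [hflip, hkeep, sum_const_zero, add_zero]
  rfl

lemma mul_star_sum_eq_sum_sum_add {G R : Type*} [AddGroup G] [Fintype G] [CommSemiring R]
    [StarRing R] (f : G → R) :
    (∑ a, f a) * star (∑ a, f a) = ∑ s, ∑ a, f a * star (f (a + s)) := calc
  _ = ∑ a, ∑ b, f a * star (f b) := by rw [star_sum, sum_mul_sum]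
  _ = ∑ a, ∑ s, f a * star (f (a + s)) :=
    sum_congr rfl fun a _ => (Fintype.sum_equiv (Equiv.addLeft a) _ _ fun _ => rfl).symm
  _ = _ := sum_comm

lemma amplitude_mul_conj_amplitude_add {n l : ℕ} (P : Matrix (Fin n) (Fin l) (ZMod 2)) (θ : ℝ)
    (y a s : Fin l → ZMod 2) :
    (-1 : ℂ) ^ (y ⬝ᵥ a).val * exp (I * θ * signSum P a) *
        conj ((-1 : ℂ) ^ (y ⬝ᵥ (a + s)).val * exp (I * θ * signSum P (a + s)))
      = (-1 : ℂ) ^ (y ⬝ᵥ s).val * exp (I * ↑(2 * θ) * signSum (affin P s) a) := by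
  have hphase : I * θ * signSum P a + conj (I * θ * signSum P (a + s))
      = I * ↑(2 * θ) * signSum (affin P s) a := by
    rw [map_mul, map_mul, conj_I, conj_ofReal, conj_signSum]
    push_cast
    linear_combination (I * θ) * signSum_sub_signSum_add P a s
  rw [map_mul, conj_neg_one_pow, ← Complex.exp_conj, dotProduct_add, neg_one_pow_val_add]
  calc _ = ((-1 : ℂ) ^ (y ⬝ᵥ a).val * (-1) ^ (y ⬝ᵥ a).val) * (-1) ^ (y ⬝ᵥ s).val *
        (exp (I * θ * signSum P a) * exp (conj (I * θ * signSum P (a + s)))) := by ring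
    _ = _ := by rw [neg_one_pow_val_mul_self, one_mul, ← exp_add, hphase]

lemma iqpProb_eq_sum_alpha {n l : ℕ} (P : Matrix (Fin n) (Fin l) (ZMod 2)) (θ : ℝ)
    (y : Fin l → ZMod 2) :
    (iqpProb P θ y : ℂ) =
      2 ^ (-(l : ℤ)) * ∑ s, (-1 : ℂ) ^ (y ⬝ᵥ s).val * alpha (affin P s) (2 * θ) := by
  have hconj : conj ((2 : ℂ) ^ (-(l : ℤ))) = 2 ^ (-(l : ℤ)) := by
    rw [map_zpow₀, map_ofNat]
  simp only [alpha_eq_sum_exp_signSum, mul_left_comm _ ((2 : ℂ) ^ (-(l : ℤ))), ← mul_sum]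
  rw [iqpProb, ofReal_pow, ← mul_conj', map_mul, hconj, mul_mul_mul_comm, mul_assoc]
  congr 2
  change (∑ a, (-1) ^ (y ⬝ᵥ a).val * exp (I * θ * signSum P a)) *
    conj (∑ a, (-1) ^ (y ⬝ᵥ a).val * exp (I * θ * signSum P a)) = _
  rw [starRingEnd_apply, mul_star_sum_eq_sum_sum_add]
  refine sum_congr rfl fun s _ => ?_
  rw [mul_sum]
  refine sum_congr rfl fun a _ => ?_
  rw [← starRingEnd_apply, amplitude_mul_conj_amplitude_add]

lemma iqpProb_add_eq_sum_alpha {n l : ℕ} (P : Matrix (Fin n) (Fin l) (ZMod 2)) (θ : ℝ)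
    (y k : Fin l → ZMod 2) :
    (iqpProb P θ (y + k) : ℂ) = 2 ^ (-(l : ℤ)) *
      ∑ s, (-1 : ℂ) ^ (y ⬝ᵥ s).val * alpha (affin P s) (2 * θ) * (-1) ^ (k ⬝ᵥ s).val := by
  rw [iqpProb_eq_sum_alpha]
  congr 1
  refine sum_congr rfl fun s _ => ?_
  rw [add_dotProduct, neg_one_pow_val_add]
  ring

lemma mem_code_transpose_iff {l : ℕ} {M : Matrix (Fin l) (Fin l) (ZMod 2)} (hM : M * M = M)
    {s : Fin l → ZMod 2} : s ∈ code Mᵀ ↔ ∀ k, M *ᵥ k = 0 → k ⬝ᵥ s = 0 := by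
  refine ⟨?_, fun h => mem_image.mpr ⟨s, mem_univ s, ?_⟩⟩
  · rintro hs k hk
    obtain ⟨t, -, rfl⟩ := mem_image.mp hs
    rw [dotProduct_mulVec, vecMul_transpose, hk, zero_dotProduct]
  · funext i
    -- `eᵢ + M eᵢ ∈ ker M`, and pairing it with `s` compares `sᵢ` with `(Mᵀ s)ᵢ`.
    have hk : M *ᵥ (Pi.single i 1 + M *ᵥ Pi.single i 1) = 0 := by
      rw [mulVec_add, mulVec_mulVec, hM, ZModModule.add_self]
    have h0 := h _ hk
    rw [add_dotProduct, ← vecMul_transpose, ← dotProduct_mulVec, single_dotProduct,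
      single_dotProduct, one_mul, one_mul, CharTwo.add_eq_zero] at h0
    exact h0.symm

lemma sum_ker_neg_one_pow_dotProduct {m : Type*} [Fintype m] {l : ℕ}
    (A : Matrix m (Fin l) (ZMod 2)) (s : Fin l → ZMod 2) :
    ∑ k with A *ᵥ k = 0, (-1 : ℂ) ^ (k ⬝ᵥ s).val =
      if ∀ k, A *ᵥ k = 0 → k ⬝ᵥ s = 0 then 2 ^ (l - A.rank) else 0 := by
  split_ifs with hs
  · rw [sum_congr rfl fun k hk => by rw [hs k (mem_filter.mp hk).2, ZMod.val_zero, pow_zero],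
      sum_const, card_mulVec_eq_zero, ZMod.card, Fintype.card_fin, nsmul_one]
    push_cast
    rfl
  · push Not at hs
    obtain ⟨k₀, hk₀, hk₀s⟩ := hs
    replace hk₀s := (zmod_two_eq_zero_or_one _).resolve_left hk₀s
    refine sum_involution (fun k _ => k + k₀) (fun k _ => ?_) (fun k _ _ => ?_) (fun k hk => ?_)
      (fun k _ => by rw [add_assoc, ZModModule.add_self, add_zero])
    · rw [add_dotProduct, neg_one_pow_val_add, hk₀s, ZMod.val_one]
      ring
    · rintro h
      rw [add_eq_left] at h
      simp [h] at hk₀s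
    · rw [mem_filter] at hk ⊢
      rw [mulVec_add, hk.2, hk₀, add_zero]
      exact ⟨mem_univ _, rfl⟩

theorem marginal_eq_alpha_sum_general {n l : ℕ} (P : Matrix (Fin n) (Fin l) (ZMod 2)) (θ : ℝ)
    (M : Matrix (Fin l) (Fin l) (ZMod 2)) (hM : M * M = M)
    (x : Fin l → ZMod 2) :
    ((∑ k ∈ Finset.univ.filter (fun k : Fin l → ZMod 2 => M.mulVec k = 0),
        iqpProb P θ (x + k) : ℝ) : ℂ) =
      (2 : ℂ) ^ (-(Mᵀ.rank : ℤ)) *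
        ∑ s ∈ code Mᵀ, (-1 : ℂ) ^ (x ⬝ᵥ s).val * alpha (affin P s) (2 * θ) := by
  have hr : Mᵀ.rank ≤ l := by simpa using Mᵀ.rank_le_card_width
  have hcode : code Mᵀ = univ.filter fun s => ∀ k, M *ᵥ k = 0 → k ⬝ᵥ s = 0 := by
    ext s
    rw [mem_code_transpose_iff hM, mem_filter, and_iff_right (mem_univ s)]
  calc ((∑ k with M *ᵥ k = 0, iqpProb P θ (x + k) : ℝ) : ℂ)
      = ∑ k with M *ᵥ k = 0, 2 ^ (-(l : ℤ)) * ∑ s,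
          (-1 : ℂ) ^ (x ⬝ᵥ s).val * alpha (affin P s) (2 * θ) * (-1) ^ (k ⬝ᵥ s).val := by
        push_cast
        exact sum_congr rfl fun k _ => iqpProb_add_eq_sum_alpha P θ x k
    _ = 2 ^ (-(l : ℤ)) * ∑ s, (-1 : ℂ) ^ (x ⬝ᵥ s).val * alpha (affin P s) (2 * θ) *
          ∑ k with M *ᵥ k = 0, (-1) ^ (k ⬝ᵥ s).val := by
        rw [← mul_sum, sum_comm]
        simp only [mul_sum]
    _ = 2 ^ (-(l : ℤ)) *
          ∑ s ∈ code Mᵀ, (-1 : ℂ) ^ (x ⬝ᵥ s).val * alpha (affin P s) (2 * θ) *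
            2 ^ (l - Mᵀ.rank) := by
        rw [hcode, sum_filter]
        congr 1
        refine sum_congr rfl fun s _ => ?_
        rw [sum_ker_neg_one_pow_dotProduct, rank_transpose, mul_ite, mul_zero]
    _ = _ := by
      rw [← sum_mul, mul_comm _ (2 ^ (l - _)), ← mul_assoc, zpow_neg_mul_pow_sub two_ne_zero hr]

/-- for an idempotent projector `M` on `F₂ˡ`, with `K = ker M`,
`R* = column space of Mᵀ` and `d = dim R*`, for `x` in the range of `M`:
`Σ_{k∈K} ℙ[X=x+k] = 2^{−d} · Σ_{s∈R*} (−1)^{x·s} · α_{(P_s,2θ)}`. -/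
theorem marginal_eq_alpha_sum {n l : ℕ} (P : Matrix (Fin n) (Fin l) (ZMod 2)) (θ : ℝ)
    (M : Matrix (Fin l) (Fin l) (ZMod 2)) (hM : M * M = M)
    (x : Fin l → ZMod 2) (hx : M.mulVec x = x) :
    ((∑ k ∈ Finset.univ.filter (fun k : Fin l → ZMod 2 => M.mulVec k = 0),
        iqpProb P θ (x + k) : ℝ) : ℂ) =
      (2 : ℂ) ^ (-(Mᵀ.rank : ℤ)) *
        ∑ s ∈ code Mᵀ, (-1 : ℂ) ^ (x ⬝ᵥ s).val * alpha (affin P s) (2 * θ) :=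
  marginal_eq_alpha_sum_general P θ M hM x
end
end
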